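/- arXiv:1603.08367 — 2 statements merged into one kernel-verified Lean document; each statement's English description precedes it below -/
import Mathlib

section
/- Let A ⊆ ℝⁿ be nonempty and reflection-invariant, B := A ∩ ℝ≥0ⁿ, and x ∈ ℝⁿ. If p is a best approximation to |x| from B and s ∈ {±1}ⁿ is defined by s_i = 1 if x_i ≥ 0 and s_i = −1 otherwise, then s ⊙ p is a best approximation to x from A. -/
/-! Write `|x|` for the coordinatewise absolute value and `s` for the sign pattern of `x`, so that
`s ⊙ |x| = x`. Reflecting in the coordinate hyperplanes is an isometry mapping `A` onto itself, and
`q ↦ s ⊙ q` carries `|x|` to `x`, so `‖s ⊙ p - x‖ = ‖p - |x|‖`. For any `q ∈ A`, the point `|q|` lies in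
`B` by reflection invariance, and `‖|q| - |x|‖ ≤ ‖q - x‖` coordinatewise by the reverse triangle
inequality; minimality of `p` then gives `‖s ⊙ p - x‖ ≤ ‖q - x‖`. -/

noncomputable section

def projSet {n : ℕ} (M : Set (EuclideanSpace ℝ (Fin n))) (x : EuclideanSpace ℝ (Fin n)) :
    Set (EuclideanSpace ℝ (Fin n)) :=
  {p | p ∈ M ∧ ∀ q ∈ M, ‖p - x‖ ≤ ‖q - x‖}

def ReflInvariant {n : ℕ} (M : Set (EuclideanSpace ℝ (Fin n))) : Prop :=
  ∀ x ∈ M, ∀ b : Fin n → ℝ, (∀ i, b i = 1 ∨ b i = -1) →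
    (WithLp.toLp 2 (fun i => b i * x i) : EuclideanSpace ℝ (Fin n)) ∈ M

theorem PiLp.norm_le_norm_of_forall_norm_le {ι : Type*} [Fintype ι] {β : ι → Type*}
    [∀ i, SeminormedAddCommGroup (β i)] {x y : PiLp 2 β} (h : ∀ i, ‖x i‖ ≤ ‖y i‖) :
    ‖x‖ ≤ ‖y‖ := by
  rw [PiLp.norm_eq_of_L2, PiLp.norm_eq_of_L2]
  gcongr with i
  exact h i

theorem EuclideanSpace.norm_le_norm_of_forall_abs_le {ι : Type*} [Fintype ι]
    {x y : EuclideanSpace ℝ ι} (h : ∀ i, |x i| ≤ |y i|) : ‖x‖ ≤ ‖y‖ :=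
  PiLp.norm_le_norm_of_forall_norm_le h

theorem EuclideanSpace.norm_eq_norm_of_forall_abs_eq {ι : Type*} [Fintype ι]
    {x y : EuclideanSpace ℝ ι} (h : ∀ i, |x i| = |y i|) : ‖x‖ = ‖y‖ :=
  le_antisymm (norm_le_norm_of_forall_abs_le fun i => (h i).le)
    (norm_le_norm_of_forall_abs_le fun i => (h i).ge)

theorem EuclideanSpace.norm_abs_sub_abs_le {ι : Type*} [Fintype ι] (x y : EuclideanSpace ℝ ι) :
    ‖(WithLp.toLp 2 (fun i => |x i|) : EuclideanSpace ℝ ι) - WithLp.toLp 2 (fun i => |y i|)‖ ≤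
      ‖x - y‖ :=
  norm_le_norm_of_forall_abs_le fun i => abs_abs_sub_abs_le_abs_sub (x i) (y i)

/-- Unlike `Real.sign`, this is `1` at `0`, so it is always `±1`. -/
def nonnegSign (r : ℝ) : ℝ := if 0 ≤ r then 1 else -1

theorem nonnegSign_eq_one_or_eq_neg_one (r : ℝ) : nonnegSign r = 1 ∨ nonnegSign r = -1 := by
  unfold nonnegSign
  split_ifs <;> simp

theorem abs_nonnegSign (r : ℝ) : |nonnegSign r| = 1 := by
  rcases nonnegSign_eq_one_or_eq_neg_one r with h | h <;> simp [h]

theorem nonnegSign_mul_abs (r : ℝ) : nonnegSign r * |r| = r := by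
  unfold nonnegSign
  split_ifs with h
  · simp [abs_of_nonneg h]
  · simp [abs_of_neg (not_le.mp h)]

theorem nonnegSign_mul_self (r : ℝ) : nonnegSign r * r = |r| := by
  unfold nonnegSign
  split_ifs with h
  · simp [abs_of_nonneg h]
  · simp [abs_of_neg (not_le.mp h)]

theorem EuclideanSpace.norm_nonnegSign_mul_sub_eq {ι : Type*} [Fintype ι]
    (p x : EuclideanSpace ℝ ι) :
    ‖(WithLp.toLp 2 (fun i => nonnegSign (x i) * p i) : EuclideanSpace ℝ ι) - x‖ =
      ‖p - WithLp.toLp 2 (fun i => |x i|)‖ := by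
  refine norm_eq_norm_of_forall_abs_eq fun i => ?_
  calc |nonnegSign (x i) * p i - x i|
      = |nonnegSign (x i) * (p i - |x i|)| := by rw [mul_sub, nonnegSign_mul_abs]
    _ = |(p - WithLp.toLp 2 (fun i => |x i|)) i| := by
        rw [abs_mul, abs_nonnegSign, one_mul]; rfl

theorem ReflInvariant.abs_mem {n : ℕ} {A : Set (EuclideanSpace ℝ (Fin n))} (hA : ReflInvariant A)
    {q : EuclideanSpace ℝ (Fin n)} (hq : q ∈ A) :
    (WithLp.toLp 2 (fun i => |q i|) : EuclideanSpace ℝ (Fin n)) ∈ A := by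
  simpa only [nonnegSign_mul_self] using
    hA q hq _ fun i => nonnegSign_eq_one_or_eq_neg_one (q i)

theorem signed_proj_onto_nonneg_part_is_proj_general
    {n : ℕ} (A : Set (EuclideanSpace ℝ (Fin n)))
    (hrefl : ReflInvariant A)
    (B : Set (EuclideanSpace ℝ (Fin n)))
    (hB : B = A ∩ {y | ∀ i, 0 ≤ y i})
    (x p : EuclideanSpace ℝ (Fin n))
    (hp : p ∈ projSet B (WithLp.toLp 2 (fun i => |x i|) : EuclideanSpace ℝ (Fin n)))
    (s : Fin n → ℝ) (hs : ∀ i, s i = if 0 ≤ x i then 1 else -1) :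
    (WithLp.toLp 2 (fun i => s i * p i) : EuclideanSpace ℝ (Fin n)) ∈ projSet A x := by
  subst hB
  obtain rfl : s = fun i => nonnegSign (x i) := funext hs
  obtain ⟨⟨hpA, -⟩, hpmin⟩ := hp
  refine ⟨hrefl p hpA _ fun i => nonnegSign_eq_one_or_eq_neg_one (x i), fun q hq => ?_⟩
  have habs_q : (WithLp.toLp 2 (fun i => |q i|) : EuclideanSpace ℝ (Fin n)) ∈
      A ∩ {y | ∀ i, 0 ≤ y i} := ⟨hrefl.abs_mem hq, fun i => abs_nonneg (q i)⟩
  calc _ = ‖p - WithLp.toLp 2 (fun i => |x i|)‖ := EuclideanSpace.norm_nonnegSign_mul_sub_eq p x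
    _ ≤ ‖WithLp.toLp 2 (fun i => |q i|) - WithLp.toLp 2 (fun i => |x i|)‖ := hpmin _ habs_q
    _ ≤ ‖q - x‖ := EuclideanSpace.norm_abs_sub_abs_le q x

theorem signed_proj_onto_nonneg_part_is_proj
    {n : ℕ} (A : Set (EuclideanSpace ℝ (Fin n))) (hA : A.Nonempty)
    (hrefl : ReflInvariant A)
    (B : Set (EuclideanSpace ℝ (Fin n)))
    (hB : B = A ∩ {y | ∀ i, 0 ≤ y i})
    (x p : EuclideanSpace ℝ (Fin n))
    (hp : p ∈ projSet B (WithLp.toLp 2 (fun i => |x i|) : EuclideanSpace ℝ (Fin n)))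
    (s : Fin n → ℝ) (hs : ∀ i, s i = if 0 ≤ x i then 1 else -1) :
    (WithLp.toLp 2 (fun i => s i * p i) : EuclideanSpace ℝ (Fin n)) ∈ projSet A x :=
  signed_proj_onto_nonneg_part_is_proj_general A hrefl B hB x p hp s hs

end
end

section
/- Let v ∈ C_I with ‖v‖₂ < λ₂, where C_I is a face of the scaled canonical simplex C, and let q be any best approximation to v from D = {s ∈ ℝ≥0ⁿ : ‖s‖₁ = λ₁, ‖s‖₂ = λ₂}. Then q ∈ C_I, i.e., q_i = 0 for all i ∉ I. -/
/-!
If `q j > 0` for some `j ∉ I`, then, since `q` and `v` have the same mass and `v j = 0`, some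
coordinate has `q i < v i`. Moving the mass `q j` from `j` to `i` stays in `C`, does not decrease
the Euclidean norm and strictly decreases the distance to `v`. The segment from `v`
(norm `< λ₂`) to this new point lies in the convex set `C` and meets the sphere of radius `λ₂`,
at a point of `D` strictly closer to `v` than `q`.
-/

noncomputable section

def l1 {n : ℕ} (x : EuclideanSpace ℝ (Fin n)) : ℝ := ∑ i, |x i|

open Finset

theorem Convex.exists_norm_eq_norm_sub_le {E : Type*} [NormedAddCommGroup E] [NormedSpace ℝ E]
    {K : Set E} (hK : Convex ℝ K) {v s : E} (hv : v ∈ K) (hs : s ∈ K) {r : ℝ}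
    (hvr : ‖v‖ ≤ r) (hrs : r ≤ ‖s‖) : ∃ x ∈ K, ‖x‖ = r ∧ ‖x - v‖ ≤ ‖s - v‖ := by
  obtain ⟨x, hx, hxr⟩ := (convex_segment v s).isPreconnected.intermediate_value
    (left_mem_segment ℝ v s) (right_mem_segment ℝ v s) continuous_norm.continuousOn ⟨hvr, hrs⟩
  refine ⟨x, hK.segment_subset hv hs hx, hxr, ?_⟩
  simp only [← dist_eq_norm, dist_comm _ v]
  linarith [dist_add_dist_of_mem_segment hx, dist_nonneg (x := x) (y := s)]

theorem convex_nonneg_sum_eq {ι : Type*} [Fintype ι] (a : ℝ) :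
    Convex ℝ {c : EuclideanSpace ℝ ι | (∀ i, 0 ≤ c i) ∧ ∑ i, c i = a} := by
  rintro x ⟨hx0, hxa⟩ y ⟨hy0, hya⟩ s t hs ht hst
  refine ⟨fun i => ?_, ?_⟩
  · simp only [PiLp.add_apply, PiLp.smul_apply, smul_eq_mul]
    exact add_nonneg (mul_nonneg hs (hx0 i)) (mul_nonneg ht (hy0 i))
  · simp only [PiLp.add_apply, PiLp.smul_apply, smul_eq_mul, sum_add_distrib, ← mul_sum, hxa, hya]
    rw [← add_mul, hst, one_mul]

theorem Finset.exists_lt_of_sum_eq_of_lt {ι : Type*} [Fintype ι] {f g : ι → ℝ}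
    (hfg : ∑ i, f i = ∑ i, g i) {j : ι} (hj : g j < f j) : ∃ i, f i < g i := by
  by_contra! h
  exact (sum_lt_sum (fun k _ => h k) ⟨j, mem_univ j, hj⟩).ne' hfg

namespace EuclideanSpace

theorem norm_add_smul_single_sub_single_sq {ι : Type*} [Fintype ι] [DecidableEq ι]
    (x : EuclideanSpace ℝ ι) {i j : ι} (hij : i ≠ j) (c : ℝ) :
    ‖x + c • (single i 1 - single j 1)‖ ^ 2 = ‖x‖ ^ 2 + 2 * c * (x i - x j) + 2 * c ^ 2 := by
  have hij' : inner ℝ (single i 1 : EuclideanSpace ℝ ι) (single j 1) = 0 := by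
    simp [inner_single_left, hij.symm]
  rw [norm_add_sq_real, inner_smul_right, inner_sub_right, inner_single_right,
    inner_single_right, norm_smul, mul_pow, norm_sub_sq_real, hij']
  simp only [Real.ringHom_apply, Real.norm_eq_abs, sq_abs, PiLp.norm_single, norm_one]
  ring

theorem exists_transfer_mass_closer {ι : Type*} [Fintype ι]
    {q v : EuclideanSpace ℝ ι} (hq : ∀ k, 0 ≤ q k) {i j : ι} (hij : i ≠ j)
    (hqj : 0 < q j) (hvj : v j = 0) (hqi : q i < v i) :
    ∃ s : EuclideanSpace ℝ ι,
      (∀ k, 0 ≤ s k) ∧ ∑ k, s k = ∑ k, q k ∧ ‖q‖ ≤ ‖s‖ ∧ ‖s - v‖ < ‖q - v‖ := by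
  classical
  set w : EuclideanSpace ℝ ι := q j • (single i 1 - single j 1)
  refine ⟨q + w, fun k => ?_, ?_, ?_, ?_⟩
  · by_cases hki : k = i
    · subst hki; simp [w, hij, add_nonneg (hq k) hqj.le]
    by_cases hkj : k = j
    · subst hkj; simp [w, hki]
    · simp [w, hki, hkj, hq k]
  · simp [w, sum_add_distrib, ← mul_sum, sum_sub_distrib]
  · have h := norm_add_smul_single_sub_single_sq q hij (q j)
    refine le_of_pow_le_pow_left₀ two_ne_zero (norm_nonneg _) ?_
    nlinarith [hq i]
  · have h := norm_add_smul_single_sub_single_sq (q - v) hij (q j)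
    rw [show q + w - v = q - v + w by abel]
    refine lt_of_pow_lt_pow_left₀ 2 (norm_nonneg _) ?_
    simp only [PiLp.sub_apply, hvj] at h
    nlinarith

end EuclideanSpace

theorem l1_eq_sum_of_nonneg {n : ℕ} {x : EuclideanSpace ℝ (Fin n)} (hx : ∀ i, 0 ≤ x i) :
    l1 x = ∑ i, x i :=
  sum_congr rfl fun i _ => abs_of_nonneg (hx i)

theorem proj_from_simplex_face_stays_on_face_general
    {n : ℕ} (l₁ l₂ : ℝ)
    (C : Set (EuclideanSpace ℝ (Fin n)))
    (hC : C = {c | (∀ i, 0 ≤ c i) ∧ ∑ i, c i = l₁})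
    (I : Set (Fin n))
    (CI : Set (EuclideanSpace ℝ (Fin n)))
    (hCI : CI = {c ∈ C | ∀ i ∉ I, c i = 0})
    (D : Set (EuclideanSpace ℝ (Fin n)))
    (hD : D = {s | (∀ i, 0 ≤ s i) ∧ l1 s = l₁ ∧ ‖s‖ = l₂})
    (v : EuclideanSpace ℝ (Fin n)) (hv : v ∈ CI) (hvn : ‖v‖ < l₂)
    (q : EuclideanSpace ℝ (Fin n)) (hq : q ∈ projSet D v) :
    ∀ i ∉ I, q i = 0 := by
  subst hC hCI hD
  obtain ⟨hvC, hvI⟩ := hv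
  obtain ⟨⟨hq0, hq1, hqn⟩, hqmin⟩ := hq
  rw [l1_eq_sum_of_nonneg hq0] at hq1
  intro j hj
  by_contra hqj
  have hqj : 0 < q j := (hq0 j).lt_of_ne' hqj
  have hvj : v j = 0 := hvI j hj
  obtain ⟨i, hqi⟩ : ∃ i, q i < v i :=
    exists_lt_of_sum_eq_of_lt (hq1.trans hvC.2.symm) (hvj ▸ hqj)
  have hij : i ≠ j := by rintro rfl; linarith [hq0 i]
  obtain ⟨s, hs0, hs1, hsn, hsv⟩ := EuclideanSpace.exists_transfer_mass_closer hq0 hij hqj hvj hqi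
  obtain ⟨x, ⟨hx0, hx1⟩, hxn, hxv⟩ := (convex_nonneg_sum_eq l₁).exists_norm_eq_norm_sub_le hvC
    ⟨hs0, hs1.trans hq1⟩ hvn.le (hqn ▸ hsn)
  have := hqmin x ⟨hx0, (l1_eq_sum_of_nonneg hx0).trans hx1, hxn⟩
  linarith

theorem proj_from_simplex_face_stays_on_face
    {n : ℕ} (l₁ l₂ : ℝ) (h1 : 0 < l₁) (h2 : 0 < l₂)
    (hlow : l₂ ≤ l₁) (hhigh : l₁ ≤ Real.sqrt n * l₂)
    (C : Set (EuclideanSpace ℝ (Fin n)))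
    (hC : C = {c | (∀ i, 0 ≤ c i) ∧ ∑ i, c i = l₁})
    (I : Set (Fin n))
    (CI : Set (EuclideanSpace ℝ (Fin n)))
    (hCI : CI = {c ∈ C | ∀ i ∉ I, c i = 0})
    (D : Set (EuclideanSpace ℝ (Fin n)))
    (hD : D = {s | (∀ i, 0 ≤ s i) ∧ l1 s = l₁ ∧ ‖s‖ = l₂})
    (v : EuclideanSpace ℝ (Fin n)) (hv : v ∈ CI) (hvn : ‖v‖ < l₂)
    (q : EuclideanSpace ℝ (Fin n)) (hq : q ∈ projSet D v) :
    ∀ i ∉ I, q i = 0 :=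
  proj_from_simplex_face_stays_on_face_general l₁ l₂ C hC I CI hCI D hD v hv hvn q hq

end
end
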